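/- Let α, λ ∈ ℂ with Re α > 0 and Re λ > 0. Then lim_{t→+∞} e^(−λt)·I_α⟨x ↦ e^(λx)⟩(t) = λ^(−α), where λ^(−α) := exp(−α·Log λ) with the principal branch of the complex logarithm (so arg λ ∈ (−π/2, π/2)). -/

import Mathlib

/-- Complex power of a real number via the real logarithm:
`s ^ w := exp (w * log s)`. -/
noncomputable def cpowR (s : ℝ) (w : ℂ) : ℂ := Complex.exp (w * Real.log s)

/-- The Riemann–Liouville integral `I_α⟨f⟩(t) = ∫_0^t f x * (t-x)^(α-1)/Γ(α) dx`. -/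
noncomputable def RL (α : ℂ) (f : ℝ → ℂ) (t : ℝ) : ℂ :=
  ∫ x in (0:ℝ)..t, f x * cpowR (t - x) (α - 1) / Complex.Gamma α

/-
Substituting `u = t - x` turns `e^{-λt} I_α⟨e^{λ·}⟩(t)` into `Γ(α)⁻¹ ∫_0^t u^{α-1} e^{-λu} du`,
so the limit is the Laplace integral `Γ(α)⁻¹ ∫_0^∞ u^{α-1} e^{-λu} du`. For real `λ > 0` this
integral is `λ^{-α} Γ(α)` by scaling in Euler's integral. Both sides are holomorphic in `λ` on the
right half-plane (differentiate under the integral sign, dominating `u e^{-Re λ u}` by a multiple of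
`e^{-Re λ u / 2}`), so the identity theorem extends the formula to all `Re λ > 0`.
-/

open MeasureTheory Set Filter Topology Complex

lemma cpowR_eq_cpow {s : ℝ} (hs : 0 < s) (w : ℂ) : cpowR s w = (s : ℂ) ^ w := by
  rw [cpowR, cpow_def_of_ne_zero (ofReal_ne_zero.2 hs.ne'), ← ofReal_log hs.le, mul_comm]

lemma mul_exp_neg_mul_le {ε : ℝ} (hε : 0 < ε) (u : ℝ) :
    u * Real.exp (-(ε * u)) ≤ 2 / ε * Real.exp (-(ε / 2 * u)) := by
  have h := Real.add_one_le_exp (ε / 2 * u)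
  calc u * Real.exp (-(ε * u)) ≤ 2 / ε * Real.exp (ε / 2 * u) * Real.exp (-(ε * u)) := by
        gcongr
        rw [div_mul_eq_mul_div, le_div_iff₀' hε]; linarith
    _ = 2 / ε * Real.exp (-(ε / 2 * u)) := by
        rw [mul_assoc, ← Real.exp_add]; ring_nf

lemma norm_mul_cexp_neg_mul (c z : ℂ) (u : ℝ) :
    ‖c * cexp (-(z * u))‖ = ‖c‖ * Real.exp (-(z.re * u)) := by
  simp [norm_exp]

section LaplaceIntegral

variable {f : ℝ → ℂ}

lemma integrableOn_mul_cexp_neg_mul (hf_meas : AEStronglyMeasurable f (volume.restrict (Ioi 0)))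
    {z : ℂ} (hf : IntegrableOn (fun u => ‖f u‖ * Real.exp (-(z.re * u))) (Ioi 0)) :
    IntegrableOn (fun u : ℝ => f u * cexp (-(z * u))) (Ioi 0) :=
  hf.mono'
    (hf_meas.mul (by fun_prop : Continuous fun u : ℝ => cexp (-(z * u))).aestronglyMeasurable)
    (ae_of_all _ fun u => (norm_mul_cexp_neg_mul _ _ _).le)

lemma hasDerivAt_integral_mul_cexp_neg_mul
    (hf_meas : AEStronglyMeasurable f (volume.restrict (Ioi 0)))
    (hf : ∀ σ > 0, IntegrableOn (fun u => ‖f u‖ * Real.exp (-(σ * u))) (Ioi 0))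
    {z : ℂ} (hz : 0 < z.re) :
    HasDerivAt (fun w : ℂ => ∫ u in Ioi 0, f u * cexp (-(w * u)))
      (∫ u in Ioi 0, f u * (cexp (-(z * u)) * -u)) z := by
  obtain ⟨ε, hε, hεz⟩ := exists_between hz
  have hexp_cont (w : ℂ) : Continuous fun u : ℝ => cexp (-(w * u)) := by fun_prop
  have hre {w : ℂ} (hw : w ∈ Metric.ball z (z.re - ε)) : ε ≤ w.re := by
    have := (abs_re_le_norm (w - z)).trans (mem_ball_iff_norm.1 hw).le
    rw [sub_re, abs_le] at this
    linarith
  refine (hasDerivAt_integral_of_dominated_loc_of_deriv_le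
    (Metric.ball_mem_nhds z (sub_pos.2 hεz))
    (F' := fun w u => f u * (cexp (-(w * u)) * -u))
    (bound := fun u => 2 / ε * (‖f u‖ * Real.exp (-(ε / 2 * u))))
    (Eventually.of_forall fun w => hf_meas.mul (hexp_cont w).aestronglyMeasurable)
    (integrableOn_mul_cexp_neg_mul hf_meas (hf _ hz))
    (hf_meas.mul ((hexp_cont z).mul continuous_ofReal.neg).aestronglyMeasurable) ?_
    ((hf _ (half_pos hε)).const_mul _) (ae_of_all _ fun u w _ => ?_)).2
  · refine (ae_restrict_iff' measurableSet_Ioi).2 (ae_of_all _ fun u (hu : 0 < u) w hw => ?_)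
    calc ‖f u * (cexp (-(w * u)) * -u)‖ = ‖f u‖ * (Real.exp (-(w.re * u)) * u) := by
          simp [norm_exp, abs_of_pos hu]
      _ ≤ ‖f u‖ * (u * Real.exp (-(ε * u))) := by rw [mul_comm _ u]; gcongr; exact hre hw
      _ ≤ ‖f u‖ * (2 / ε * Real.exp (-(ε / 2 * u))) :=
          mul_le_mul_of_nonneg_left (mul_exp_neg_mul_le hε u) (norm_nonneg _)
      _ = _ := by ring
  · simpa using (((hasDerivAt_id w).mul_const (u : ℂ)).neg.cexp).const_mul (f u)

lemma differentiableOn_integral_mul_cexp_neg_mul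
    (hf_meas : AEStronglyMeasurable f (volume.restrict (Ioi 0)))
    (hf : ∀ σ > 0, IntegrableOn (fun u => ‖f u‖ * Real.exp (-(σ * u))) (Ioi 0)) :
    DifferentiableOn ℂ (fun w : ℂ => ∫ u in Ioi 0, f u * cexp (-(w * u))) {z | 0 < z.re} :=
  fun _ hz =>
    (hasDerivAt_integral_mul_cexp_neg_mul hf_meas hf hz).differentiableAt.differentiableWithinAt

end LaplaceIntegral

lemma eqOn_re_pos_of_eq_ofReal {f g : ℂ → ℂ} (hf : DifferentiableOn ℂ f {z | 0 < z.re})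
    (hg : DifferentiableOn ℂ g {z | 0 < z.re}) (hfg : ∀ r : ℝ, 0 < r → f r = g r) :
    EqOn f g {z | 0 < z.re} := by
  have hU : IsOpen {z : ℂ | 0 < z.re} := isOpen_lt continuous_const continuous_re
  have hreal : ∃ᶠ r : ℝ in 𝓝[≠] 1, f r = g r :=
    (((lt_mem_nhds one_pos).mono hfg).filter_mono nhdsWithin_le_nhds).frequently
  exact (hf.analyticOnNhd hU).eqOn_of_preconnected_of_frequently_eq (hg.analyticOnNhd hU)
    (convex_halfSpace_re_gt 0).isPreconnected (by simp)
    ((continuous_ofReal.continuousWithinAt.tendsto_nhdsWithin fun _ _ ↦ by simp_all).frequently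
      hreal)

lemma integrableOn_norm_cpow_mul_exp_neg_mul {a : ℂ} (ha : 0 < a.re) {σ : ℝ} (hσ : 0 < σ) :
    IntegrableOn (fun u : ℝ => ‖(u : ℂ) ^ (a - 1)‖ * Real.exp (-(σ * u))) (Ioi 0) := by
  refine (integrableOn_rpow_mul_exp_neg_mul_rpow (s := a.re - 1) (p := 1) (by linarith) one_pos
    hσ).congr_fun (fun u (hu : 0 < u) => ?_) measurableSet_Ioi
  simp [norm_cpow_eq_rpow_re_of_pos hu]

lemma aestronglyMeasurable_cpow_const (w : ℂ) (μ : Measure ℝ) :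
    AEStronglyMeasurable (fun u : ℝ => (u : ℂ) ^ w) μ :=
  (continuous_ofReal.measurable.pow_const w).aestronglyMeasurable

theorem integral_cpow_mul_exp_neg_mul_Ioi_of_re_pos {a z : ℂ} (ha : 0 < a.re) (hz : 0 < z.re) :
    ∫ u in Ioi (0 : ℝ), (u : ℂ) ^ (a - 1) * cexp (-(z * u)) = z ^ (-a) * Gamma a := by
  refine eqOn_re_pos_of_eq_ofReal
    (f := fun z => ∫ u in Ioi (0 : ℝ), (u : ℂ) ^ (a - 1) * cexp (-(z * u)))
    (differentiableOn_integral_mul_cexp_neg_mul (aestronglyMeasurable_cpow_const _ _)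
      fun σ => integrableOn_norm_cpow_mul_exp_neg_mul ha)
    (fun w hw =>
      ((differentiableAt_fun_id.cpow_const (Or.inl hw)).mul_const _).differentiableWithinAt)
    (fun r hr => ?_) hz
  rw [integral_cpow_mul_exp_neg_mul_Ioi ha hr, one_div,
    inv_cpow _ _ (by rw [arg_ofReal_of_nonneg hr.le]; exact Real.pi_ne_zero.symm), ← cpow_neg]

lemma exp_neg_mul_mul_RL_exp (α lam : ℂ) (t : ℝ) :
    cexp (-(lam * t)) * RL α (fun x => cexp (lam * x)) t
      = ∫ u in (0:ℝ)..t, cpowR u (α - 1) * cexp (-(lam * u)) / Gamma α := by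
  rw [RL, ← intervalIntegral.integral_const_mul]
  have hsub (x : ℝ) : cexp (-(lam * t)) * (cexp (lam * x) * cpowR (t - x) (α - 1) / Gamma α)
      = cpowR (t - x) (α - 1) * cexp (-(lam * ↑(t - x))) / Gamma α := by
    have hexp : cexp (-(lam * ↑(t - x))) = cexp (-(lam * t)) * cexp (lam * x) := by
      rw [← exp_add]; push_cast; ring_nf
    rw [hexp]; ring
  simp_rw [hsub, intervalIntegral.integral_comp_sub_left
    (fun u : ℝ => cpowR u (α - 1) * cexp (-(lam * u)) / Gamma α), sub_self, sub_zero]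

theorem stmt2 (α lam : ℂ) (hα : 0 < α.re) (hlam : 0 < lam.re) :
    Filter.Tendsto
      (fun t : ℝ => Complex.exp (-(lam * t)) * RL α (fun x : ℝ => Complex.exp (lam * x)) t)
      Filter.atTop (nhds (Complex.exp (-α * Complex.log lam))) := by
  have hcpowR : EqOn (fun u : ℝ => cpowR u (α - 1) * cexp (-(lam * u)) / Gamma α)
      (fun u : ℝ => (u : ℂ) ^ (α - 1) * cexp (-(lam * u)) / Gamma α) (Ioi 0) :=
    fun u hu => by simp only [cpowR_eq_cpow hu]
  have hint := IntegrableOn.congr_fun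
    ((integrableOn_mul_cexp_neg_mul (aestronglyMeasurable_cpow_const _ _)
      (integrableOn_norm_cpow_mul_exp_neg_mul hα hlam)).div_const (Gamma α))
    hcpowR.symm measurableSet_Ioi
  have hval : ∫ u in Ioi (0 : ℝ), cpowR u (α - 1) * cexp (-(lam * u)) / Gamma α
      = cexp (-α * log lam) := by
    rw [setIntegral_congr_fun measurableSet_Ioi hcpowR, integral_div,
      integral_cpow_mul_exp_neg_mul_Ioi_of_re_pos hα hlam,
      mul_div_cancel_right₀ _ (Gamma_ne_zero_of_re_pos hα),
      cpow_def_of_ne_zero (fun h => by simp [h] at hlam), mul_comm]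
  simpa only [exp_neg_mul_mul_RL_exp, hval, id] using
    intervalIntegral_tendsto_integral_Ioi 0 hint tendsto_id
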